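/- Let n ≥ 2 and g_1,…,g_n ∈ ℝ. Define Q : ℝ^n × ℝ^n → ℝ by Q(z,x) = exp(−(g_1 e^{x_1 + z_1} + Σ_{i=1}^{n−1}(e^{z_i − x_i} + g_{i+1} e^{x_{i+1} − z_i}) + e^{z_n − x_n})). Then for all (z,x): (−(1/2) Σ_{i=1}^n ∂²/∂z_i² + 2 g_1 e^{2z_1} + Σ_{i=1}^{n−1} g_{i+1} e^{z_{i+1}−z_i}) Q = (−(1/2) Σ_{i=1}^n ∂²/∂x_i² + g_1 g_2 e^{x_1 + x_2} + Σ_{i=1}^{n−1} g_{i+1} e^{x_{i+1}−x_i}) Q. -/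

import Mathlib

/-!
Write `Q = exp (-F)`. Each summand of `F` is a multiple of `e^{±zᵢ} e^{±xⱼ}` for a single pair
`(i, j)`, so along a coordinate line `F` has the form `a e^t + b e^{-t} + c`. Hence
`∂²Q = ((∂F)² - ∂²F) Q`, and `∑ᵢ ∂²F/∂zᵢ² = F = ∑ⱼ ∂²F/∂xⱼ²`. The identity thus reduces to
`|∇_z F|² - |∇_x F|² = 2 (V_C(z) - V_D(x))` for the two potentials. With `w = g₁ e^{x₁+z₁}`,
`uᵢ = e^{zᵢ-xᵢ}` and `vᵢ = g_{i+1} e^{x_{i+1}-zᵢ}`, the potential terms are exactly the products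
`w u₁`, `vᵢ u_{i+1}` (for `C_n`) and `w v₁`, `uᵢ vᵢ` (for `D_n`), and the difference of the
squared gradients telescopes.
-/

/-- Second partial derivative of `f` along the `i`-th coordinate at the point `p`. -/
noncomputable def pd2 (f : (ℕ → ℝ) → ℝ) (i : ℕ) (p : ℕ → ℝ) : ℝ :=
  deriv (deriv (fun t => f (Function.update p i t))) (p i)

open Finset Real Function

lemma deriv_deriv_exp_neg {f f' f'' : ℝ → ℝ} (hf : ∀ t, HasDerivAt f (f' t) t)
    (hf' : ∀ t, HasDerivAt f' (f'' t) t) (t : ℝ) :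
    deriv (deriv fun s => exp (-f s)) t = (f' t ^ 2 - f'' t) * exp (-f t) := by
  have hd : deriv (fun s => exp (-f s)) = fun s => -f' s * exp (-f s) :=
    funext fun s => ((hf s).neg.exp).deriv.trans (mul_comm _ _)
  rw [hd]
  exact ((hf' t).neg.mul (hf t).neg.exp).deriv.trans (by simp only [Pi.neg_apply]; ring)

lemma hasDerivAt_mul_exp_add_mul_exp_neg (a b t : ℝ) :
    HasDerivAt (fun s => a * exp s + b * exp (-s)) (a * exp t - b * exp (-t)) t :=
  (((hasDerivAt_exp t).const_mul a).add (((hasDerivAt_neg t).exp).const_mul b)).congr_deriv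
    (by ring)

noncomputable def expKernel (S : Finset ℕ) (a b : ℕ → ℝ) (p : ℕ → ℝ) : ℝ :=
  exp (-∑ j ∈ S, (a j * exp (p j) + b j * exp (-p j)))

lemma pd2_expKernel {S : Finset ℕ} {i : ℕ} (hi : i ∈ S) (a b p : ℕ → ℝ) :
    pd2 (expKernel S a b) i p =
      ((a i * exp (p i) - b i * exp (-p i)) ^ 2 - (a i * exp (p i) + b i * exp (-p i)))
        * expKernel S a b p := by
  set C := ∑ j ∈ S.erase i, (a j * exp (p j) + b j * exp (-p j))
  have hline : ∀ t, ∑ j ∈ S, (a j * exp (update p i t j) + b j * exp (-update p i t j))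
      = a i * exp t + b i * exp (-t) + C := by
    intro t
    rw [← add_sum_erase S _ hi, update_self]
    congr 1
    exact sum_congr rfl fun j hj => by rw [update_of_ne (ne_of_mem_erase hj)]
  have hp : ∑ j ∈ S, (a j * exp (p j) + b j * exp (-p j))
      = a i * exp (p i) + b i * exp (-p i) + C := by
    simpa using hline (p i)
  have hf' : ∀ t, HasDerivAt (fun s => a i * exp s - b i * exp (-s))
      (a i * exp t + b i * exp (-t)) t := fun t => by
    convert hasDerivAt_mul_exp_add_mul_exp_neg (a i) (-b i) t using 1 <;> ring_nf
  simp only [pd2, expKernel, hline, hp]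
  exact deriv_deriv_exp_neg (f := fun s => a i * exp s + b i * exp (-s) + C)
    (fun t => (hasDerivAt_mul_exp_add_mul_exp_neg _ _ t).add_const C) hf' (p i)

lemma sum_pd2_expKernel (S : Finset ℕ) (a b p : ℕ → ℝ) :
    ∑ i ∈ S, pd2 (expKernel S a b) i p =
      (∑ i ∈ S, (a i * exp (p i) - b i * exp (-p i)) ^ 2
        - ∑ i ∈ S, (a i * exp (p i) + b i * exp (-p i))) * expKernel S a b p := by
  rw [sum_congr rfl fun i hi => pd2_expKernel hi a b p, ← sum_mul, sum_sub_distrib]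

lemma sum_Icc_one_succ_eq_add_sum_shift {M : Type*} [AddCommMonoid M] (k : ℕ) (h : ℕ → M) :
    ∑ j ∈ Icc 1 (k + 1), h j = h 1 + ∑ j ∈ Icc 1 k, h (j + 1) := by
  rw [← add_sum_Ioc_eq_sum_Icc (by omega), ← Icc_add_one_left_eq_Ioc, ← map_add_right_Icc,
    sum_map]
  rfl

lemma sum_Icc_one_succ_ite_eq_one {α M : Type*} [AddCommMonoid M] (k : ℕ) (a : α)
    (b : ℕ → α) (F : α → ℕ → M) :
    ∑ j ∈ Icc 1 (k + 1), F (if j = 1 then a else b (j - 1)) j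
      = F a 1 + ∑ j ∈ Icc 1 k, F (b j) (j + 1) := by
  rw [sum_Icc_one_succ_eq_add_sum_shift, if_pos rfl]
  congr 1
  exact sum_congr rfl fun j hj => by rw [if_neg (by grind), add_tsub_cancel_right]

namespace TodaKernel

section Algebra

variable {R : Type*} [CommRing R] {n : ℕ} (w : R) (u v : ℕ → R)

lemma sum_boundary_diag_offDiag_left (hn : 1 ≤ n) :
    w + ∑ i ∈ Icc 1 (n - 1), (u i + v i) + u n
      = ∑ j ∈ Icc 1 n, ((if j = 1 then w else 0) + u j + if j < n then v j else 0) := by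
  obtain ⟨k, rfl⟩ : ∃ k, n = k + 1 := ⟨n - 1, by omega⟩
  simp only [sum_add_distrib]
  rw [sum_ite_eq' _ 1, if_pos (left_mem_Icc.2 hn), sum_Icc_succ_top hn u,
    sum_Icc_succ_top hn, if_neg (lt_irrefl _), add_tsub_cancel_right,
    sum_congr rfl fun j hj => if_pos (by grind : j < k + 1)]
  ring

lemma sum_boundary_diag_offDiag_right (hn : 1 ≤ n) :
    w + ∑ i ∈ Icc 1 (n - 1), (u i + v i) + u n
      = ∑ j ∈ Icc 1 n, ((if j = 1 then w else v (j - 1)) + u j) := by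
  obtain ⟨k, rfl⟩ : ∃ k, n = k + 1 := ⟨n - 1, by omega⟩
  have hu := (sum_Icc_succ_top hn u).symm.trans (sum_Icc_one_succ_eq_add_sum_shift k u)
  rw [sum_Icc_one_succ_ite_eq_one k w v fun a j => a + u j, add_tsub_cancel_right]
  simp only [sum_add_distrib]
  linear_combination hu

lemma sum_sq_grad_sub_sum_sq_grad (hn : 2 ≤ n) :
    ∑ j ∈ Icc 1 n, ((if j = 1 then w else 0) + u j - if j < n then v j else 0) ^ 2
      - ∑ j ∈ Icc 1 n, ((if j = 1 then w else v (j - 1)) - u j) ^ 2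
      = 2 * (2 * w * u 1 + ∑ i ∈ Icc 1 (n - 1), v i * u (i + 1))
        - 2 * (w * v 1 + ∑ i ∈ Icc 1 (n - 1), u i * v i) := by
  obtain ⟨k, rfl⟩ : ∃ k, n = k + 1 := ⟨n - 1, by omega⟩
  have hsq : ∀ j ∈ Icc 1 k, ((if j = 1 then w else 0) + u j - if j < k + 1 then v j else 0) ^ 2
      = (if j = 1 then w ^ 2 + 2 * w * (u 1 - v 1) else 0) + (u j - v j) ^ 2 := by
    intro j hj
    rw [if_pos (by grind : j < k + 1)]
    split_ifs with h1
    · subst h1; ring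
    · ring
  have htele : ∑ i ∈ Icc 1 k, (u (i + 1) ^ 2 - u i ^ 2) = u (k + 1) ^ 2 - u 1 ^ 2 :=
    sum_Icc_sub (f := fun i => u i ^ 2) (by omega)
  have hsplit : ∑ i ∈ Icc 1 k, (u i - v i) ^ 2 - ∑ i ∈ Icc 1 k, (v i - u (i + 1)) ^ 2
      = -∑ i ∈ Icc 1 k, (u (i + 1) ^ 2 - u i ^ 2)
        + 2 * (∑ i ∈ Icc 1 k, v i * u (i + 1) - ∑ i ∈ Icc 1 k, u i * v i) := by
    rw [mul_sub, mul_sum, mul_sum, ← sum_sub_distrib, ← sum_sub_distrib, ← sum_neg_distrib,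
      ← sum_add_distrib]
    exact sum_congr rfl fun i _ => by ring
  rw [sum_Icc_succ_top (by omega), sum_congr rfl hsq, if_neg (lt_irrefl _),
    if_neg (by omega : k + 1 ≠ 1), sum_add_distrib, sum_ite_eq' _ 1,
    if_pos (left_mem_Icc.2 (by omega)),
    sum_Icc_one_succ_ite_eq_one k w v fun a j => (a - u j) ^ 2, add_tsub_cancel_right]
  linear_combination hsplit - htele

end Algebra

noncomputable def boundary (g z x : ℕ → ℝ) : ℝ := g 1 * exp (x 1 + z 1)

noncomputable def diag (z x : ℕ → ℝ) (i : ℕ) : ℝ := exp (z i - x i)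

noncomputable def offDiag (g z x : ℕ → ℝ) (i : ℕ) : ℝ := g (i + 1) * exp (x (i + 1) - z i)

noncomputable def exponent (n : ℕ) (g z x : ℕ → ℝ) : ℝ :=
  boundary g z x + ∑ i ∈ Icc 1 (n - 1), (diag z x i + offDiag g z x i) + diag z x n

variable {n : ℕ} (g z x : ℕ → ℝ)

lemma sum_pd2_left (hn : 1 ≤ n) :
    ∑ i ∈ Icc 1 n, pd2 (fun z' => exp (-exponent n g z' x)) i z
      = (∑ j ∈ Icc 1 n, ((if j = 1 then boundary g z x else 0) + diag z x j
            - if j < n then offDiag g z x j else 0) ^ 2 - exponent n g z x)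
        * exp (-exponent n g z x) := by
  have hplus : ∀ z' j, ((if j = 1 then g 1 * exp (x 1) else 0) + exp (-x j)) * exp (z' j)
      = (if j = 1 then boundary g z' x else 0) + diag z' x j := by
    intro z' j
    rw [add_mul, diag, ← exp_add, neg_add_eq_sub]
    split_ifs with h
    · rw [h, boundary, mul_assoc, ← exp_add]
    · rw [zero_mul]
  have hminus : ∀ z' j, (if j < n then g (j + 1) * exp (x (j + 1)) else 0) * exp (-z' j)
      = if j < n then offDiag g z' x j else 0 := by
    intro z' j
    split_ifs
    · rw [offDiag, mul_assoc, ← exp_add, ← sub_eq_add_neg]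
    · exact zero_mul _
  have hsum : ∀ z', ∑ j ∈ Icc 1 n, (((if j = 1 then g 1 * exp (x 1) else 0) + exp (-x j))
      * exp (z' j) + (if j < n then g (j + 1) * exp (x (j + 1)) else 0) * exp (-z' j))
      = exponent n g z' x := fun z' => by
    simp only [hplus, hminus, exponent, sum_boundary_diag_offDiag_left _ _ _ hn]
  have hQ : (fun z' => exp (-exponent n g z' x)) = expKernel (Icc 1 n)
      (fun j => (if j = 1 then g 1 * exp (x 1) else 0) + exp (-x j))
      (fun j => if j < n then g (j + 1) * exp (x (j + 1)) else 0) :=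
    funext fun z' => by rw [expKernel, hsum]
  rw [hQ, sum_pd2_expKernel, expKernel, hsum]
  simp only [hplus, hminus]

lemma sum_pd2_right (hn : 1 ≤ n) :
    ∑ i ∈ Icc 1 n, pd2 (fun x' => exp (-exponent n g z x')) i x
      = (∑ j ∈ Icc 1 n, ((if j = 1 then boundary g z x else offDiag g z x (j - 1))
            - diag z x j) ^ 2 - exponent n g z x)
        * exp (-exponent n g z x) := by
  have hplus : ∀ x', ∀ j ∈ Icc 1 n,
      (if j = 1 then g 1 * exp (z 1) else g j * exp (-z (j - 1))) * exp (x' j)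
        = if j = 1 then boundary g z x' else offDiag g z x' (j - 1) := by
    intro x' j hj
    split_ifs with h
    · rw [h, boundary, mul_assoc, ← exp_add, add_comm]
    · rw [offDiag, Nat.sub_add_cancel (mem_Icc.1 hj).1, mul_assoc, ← exp_add, neg_add_eq_sub]
  have hminus : ∀ x' j, exp (z j) * exp (-x' j) = diag z x' j := fun x' j => by
    rw [diag, ← exp_add, ← sub_eq_add_neg]
  have hsum : ∀ x', ∑ j ∈ Icc 1 n,
      ((if j = 1 then g 1 * exp (z 1) else g j * exp (-z (j - 1))) * exp (x' j)
        + exp (z j) * exp (-x' j)) = exponent n g z x' := fun x' => by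
    rw [exponent, sum_boundary_diag_offDiag_right _ _ _ hn]
    exact sum_congr rfl fun j hj => by rw [hplus x' j hj, hminus]
  have hQ : (fun x' => exp (-exponent n g z x')) = expKernel (Icc 1 n)
      (fun j => if j = 1 then g 1 * exp (z 1) else g j * exp (-z (j - 1)))
      (fun j => exp (z j)) :=
    funext fun x' => by rw [expKernel, hsum]
  rw [hQ, sum_pd2_expKernel, expKernel, hsum,
    sum_congr rfl fun j hj => by rw [hplus x j hj, hminus]]

lemma potentialC_eq :
    2 * g 1 * exp (2 * z 1) + ∑ i ∈ Icc 1 (n - 1), g (i + 1) * exp (z (i + 1) - z i)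
      = 2 * boundary g z x * diag z x 1
        + ∑ i ∈ Icc 1 (n - 1), offDiag g z x i * diag z x (i + 1) := by
  congr 1
  · simp only [boundary, diag, mul_assoc, ← exp_add]; ring_nf
  · exact sum_congr rfl fun i _ => by rw [offDiag, diag, mul_assoc, ← exp_add]; ring_nf

lemma potentialD_eq :
    g 1 * g 2 * exp (x 1 + x 2) + ∑ i ∈ Icc 1 (n - 1), g (i + 1) * exp (x (i + 1) - x i)
      = boundary g z x * offDiag g z x 1
        + ∑ i ∈ Icc 1 (n - 1), diag z x i * offDiag g z x i := by
  congr 1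
  · rw [boundary, offDiag, mul_mul_mul_comm, ← exp_add]; ring_nf
  · exact sum_congr rfl fun i _ => by rw [offDiag, diag, mul_left_comm, ← exp_add]; ring_nf

end TodaKernel

/-- The kernel `Q(z,x) = exp(−(g_1 e^{x_1+z_1} + Σ_{i=1}^{n−1}(e^{z_i−x_i} + g_{i+1} e^{x_{i+1}−z_i})
+ e^{z_n−x_n}))` intertwines the quadratic Hamiltonians of the `C_n` and `D_n` Toda chains. -/
theorem stmt_4 (n : ℕ) (hn : 2 ≤ n) (g : ℕ → ℝ) :
    let Q : (ℕ → ℝ) → (ℕ → ℝ) → ℝ := fun z x =>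
      Real.exp (-(g 1 * Real.exp (x 1 + z 1)
        + (∑ i ∈ Finset.Icc 1 (n - 1),
            (Real.exp (z i - x i) + g (i + 1) * Real.exp (x (i + 1) - z i)))
        + Real.exp (z n - x n)))
    ∀ z x : ℕ → ℝ,
      -(1 / 2) * (∑ i ∈ Finset.Icc 1 n, pd2 (fun z' => Q z' x) i z)
          + (2 * g 1 * Real.exp (2 * z 1)
              + ∑ i ∈ Finset.Icc 1 (n - 1), g (i + 1) * Real.exp (z (i + 1) - z i)) * Q z x
        = -(1 / 2) * (∑ i ∈ Finset.Icc 1 n, pd2 (fun x' => Q z x') i x)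
          + (g 1 * g 2 * Real.exp (x 1 + x 2)
              + ∑ i ∈ Finset.Icc 1 (n - 1), g (i + 1) * Real.exp (x (i + 1) - x i)) * Q z x := by
  intro Q z x
  have hQ : ∀ z x, Q z x = exp (-TodaKernel.exponent n g z x) := fun _ _ => rfl
  simp only [hQ]
  rw [TodaKernel.sum_pd2_left g z x (by omega), TodaKernel.sum_pd2_right g z x (by omega),
    TodaKernel.potentialC_eq g z x, TodaKernel.potentialD_eq g z x]
  linear_combination (-(1 / 2) * exp (-TodaKernel.exponent n g z x)) *
    TodaKernel.sum_sq_grad_sub_sum_sq_grad (TodaKernel.boundary g z x) (TodaKernel.diag z x)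
      (TodaKernel.offDiag g z x) hn
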